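/- Let n ≥ 1 and let x_1 < x_2 < ... < x_{2n} be distinct real numbers (points on a line). With R_i := ∏_{j ≠ i} |x_i - x_j|, the sum of 1/R_i over even indices equals the sum of 1/R_i over odd indices. -/

import Mathlib

/-! The Lagrange basis polynomial of the node `x_i` has leading coefficient
`1 / ∏_{j ≠ i} (x_i - x_j)`, and the basis polynomials sum to the constant `1`; so with at least
two nodes these leading coefficients sum to zero, and so do the `1 / ∏_{j ≠ i} (x_j - x_i)`. For
increasing nodes exactly `i` of the factors `x_j - x_i` are negative, so
`∏_{j ≠ i} (x_j - x_i) = (-1)^i R_i` and the vanishing sum is `∑ (-1)^i / R_i`. -/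

open Finset Polynomial

lemma Lagrange.sum_inv_prod_sub_eq_zero {F ι : Type*} [Field F] [DecidableEq ι]
    {s : Finset ι} {v : ι → F} (hv : Set.InjOn v s) (hs : #s ≠ 1) :
    ∑ i ∈ s, (∏ j ∈ s.erase i, (v j - v i))⁻¹ = 0 := by
  rcases s.eq_empty_or_nonempty with rfl | hne
  · exact sum_empty
  have hcard := hne.card_pos
  have hcoeff := Lagrange.coeff_eq_sum hv (P := 1) (by simpa using hcard)
  simp only [coeff_one, if_neg (by omega : #s - 1 ≠ 0), eval_one, one_div] at hcoeff
  have hflip : ∀ i ∈ s,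
      ∏ j ∈ s.erase i, (v j - v i) = (-1) ^ (#s - 1) * ∏ j ∈ s.erase i, (v i - v j) :=
    fun i hi => by rw [← card_erase_of_mem hi, ← prod_neg]; simp only [neg_sub]
  rw [sum_congr rfl fun i hi => by rw [hflip i hi, mul_inv, ← inv_pow, inv_neg_one], ← mul_sum,
    ← hcoeff, mul_zero]

lemma prod_sub_eq_neg_one_pow_card_Iio_mul_prod_abs {ι 𝕜 : Type*} [Fintype ι] [LinearOrder ι]
    [LocallyFiniteOrderBot ι] [CommRing 𝕜] [LinearOrder 𝕜] [IsStrictOrderedRing 𝕜]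
    {f : ι → 𝕜} (hf : StrictMono f) (i : ι) :
    ∏ j ∈ univ.erase i, (f j - f i) =
      (-1) ^ #(Iio i) * ∏ j ∈ univ.erase i, |f i - f j| := by
  have hsign : ∀ j ∈ univ.erase i, f j - f i = (if j < i then -1 else 1) * |f i - f j| := by
    intro j hj
    rcases (ne_of_mem_erase hj).lt_or_gt with hji | hij
    · rw [if_pos hji, abs_of_pos (sub_pos.mpr (hf hji)), neg_one_mul, neg_sub]
    · rw [if_neg hij.not_gt, abs_of_neg (sub_neg.mpr (hf hij)), one_mul, neg_sub]
  rw [prod_congr rfl hsign, prod_mul_distrib, prod_ite, prod_const, prod_const_one, mul_one,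
    filter_erase, filter_gt_eq_Iio, erase_eq_of_notMem (by simp)]

lemma sum_neg_one_pow_mul_eq_sub {ι R : Type*} [CommRing R] (s : Finset ι) (k : ι → ℕ)
    (f : ι → R) :
    ∑ i ∈ s, (-1) ^ k i * f i =
      ∑ i ∈ s with k i % 2 = 0, f i - ∑ i ∈ s with k i % 2 = 1, f i := by
  rw [← sum_filter_add_sum_filter_not s (fun i => k i % 2 = 0), sub_eq_add_neg,
    ← sum_neg_distrib]
  congr 1
  · exact sum_congr rfl fun i hi => by
      rw [(Nat.even_iff.mpr (mem_filter.mp hi).2).neg_one_pow, one_mul]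
  · refine sum_congr (filter_congr fun i _ => by omega) fun i hi => ?_
    rw [(Nat.odd_iff.mpr (mem_filter.mp hi).2).neg_one_pow, neg_one_mul]

theorem mcdougall_line_general (n : ℕ) (x : Fin (2 * n) → ℝ)
    (hx : StrictMono x) (R : Fin (2 * n) → ℝ)
    (hR : ∀ i, R i = ∏ j ∈ Finset.univ.erase i, |x i - x j|) :
    ∑ i ∈ Finset.univ.filter (fun i : Fin (2 * n) => (i : ℕ) % 2 = 0), 1 / R i =
      ∑ i ∈ Finset.univ.filter (fun i : Fin (2 * n) => (i : ℕ) % 2 = 1), 1 / R i := by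
  have hvanish := Lagrange.sum_inv_prod_sub_eq_zero hx.injective.injOn
    (s := univ) (by rw [card_univ, Fintype.card_fin]; omega)
  have hterm : ∀ i : Fin (2 * n),
      (∏ j ∈ univ.erase i, (x j - x i))⁻¹ = (-1) ^ (i : ℕ) * (1 / R i) := fun i => by
    rw [prod_sub_eq_neg_one_pow_card_Iio_mul_prod_abs hx, Fin.card_Iio, ← hR, mul_inv,
      ← inv_pow, inv_neg_one, one_div]
  rw [sum_congr rfl fun i _ => hterm i, sum_neg_one_pow_mul_eq_sub] at hvanish
  exact sub_eq_zero.mp hvanish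

theorem mcdougall_line (n : ℕ) (hn : 1 ≤ n) (x : Fin (2 * n) → ℝ)
    (hx : StrictMono x) (R : Fin (2 * n) → ℝ)
    (hR : ∀ i, R i = ∏ j ∈ Finset.univ.erase i, |x i - x j|) :
    ∑ i ∈ Finset.univ.filter (fun i : Fin (2 * n) => (i : ℕ) % 2 = 0), 1 / R i =
      ∑ i ∈ Finset.univ.filter (fun i : Fin (2 * n) => (i : ℕ) % 2 = 1), 1 / R i :=
  mcdougall_line_general n x hx R hR
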